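/- arXiv:1512.08400 — 3 statements merged into one kernel-verified Lean document; each statement's English description precedes it below -/
import Mathlib

section
/- Let χ be a real Dirichlet character (i.e., χ² = χ₀, the principal character). Then for all real σ > 1 and all real τ, one has L(σ, χ₀)³ · |L(σ+iτ, χ)|⁴ · |L(σ+2iτ, χ₀)| ≥ 1, and consequently, for σ ≥ 1 + ε with 0 < ε ≤ 1, |L(σ+iτ, χ)|⁻¹ ≪ ε⁻¹ with an absolute implied constant. -/
/-!
The Euler product gives log L(s, χ) = Σ_p Σ_k χ(p)^k / (k p^{ks}), so for real χ the logarithm of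
L(σ, χ₀)³ L(σ+iτ, χ)⁴ L(σ+2iτ, χ₀) is a nonnegative combination of terms 3 + 4 cos θ + cos 2θ ≥ 0.
For the lower bound, both principal factors are at most Σ n^{-σ} ≤ 1 + 1/(σ - 1) ≤ 2/ε, which
leaves 1 ≤ (2/ε)⁴ |L(σ+iτ, χ)|⁴.
-/

open Complex

lemma Real.tsum_nat_add_two_rpow_neg_le {σ : ℝ} (hσ : 1 < σ) :
    ∑' n : ℕ, ((n + 2 : ℕ) : ℝ) ^ (-σ) ≤ (σ - 1)⁻¹ := by
  have anti : AntitoneOn (fun x : ℝ ↦ x ^ (-σ)) (Set.Ici ((1 : ℕ) : ℝ)) :=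
    (Real.antitoneOn_rpow_Ioi_of_exponent_nonpos (by linarith)).mono
      fun x hx ↦ zero_lt_one.trans_le (by simpa using hx)
  have integrable : MeasureTheory.IntegrableOn (fun x : ℝ ↦ x ^ (-σ)) (Set.Ioi ((1 : ℕ) : ℝ)) :=
    integrableOn_Ioi_rpow_of_lt (by linarith) (by norm_num)
  calc ∑' n : ℕ, ((n + 2 : ℕ) : ℝ) ^ (-σ)
      ≤ ∫ x in Set.Ioi ((1 : ℕ) : ℝ), x ^ (-σ) :=
        anti.tsum_comp_add_le_integral 1 integrable
          fun t ht ↦ Real.rpow_nonneg (zero_le_one.trans (le_of_lt (by simpa using ht))) _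
    _ = (σ - 1)⁻¹ := by
        rw [Nat.cast_one, integral_Ioi_rpow_of_lt (by linarith) one_pos, Real.one_rpow,
          show -σ + 1 = -(σ - 1) by ring, div_neg, neg_div, neg_neg, one_div]

lemma LSeries.norm_le_one_add_inv_sub_one {f : ℕ → ℂ} (hf : ∀ n, ‖f n‖ ≤ 1) {s : ℂ}
    (hs : 1 < s.re) : ‖LSeries f s‖ ≤ 1 + (s.re - 1)⁻¹ := by
  set g : ℕ → ℝ := fun n ↦ ‖LSeries.term (fun _ ↦ 1) s n‖
  have hg : Summable g :=
    (LSeriesSummable_of_bounded_of_one_lt_re (m := 1) (fun _ _ ↦ norm_one.le) hs).norm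
  have hfg (n : ℕ) : ‖LSeries.term f s n‖ ≤ g n := LSeries.norm_term_le s (by simpa using hf n)
  have hg_add_two (n : ℕ) : g (n + 2) = ((n + 2 : ℕ) : ℝ) ^ (-s.re) := by
    simp [g, LSeries.norm_term_eq, Real.rpow_neg (by positivity : (0 : ℝ) ≤ n + 2)]
  calc ‖LSeries f s‖
      ≤ ∑' n, g n :=
        (norm_tsum_le_tsum_norm (hg.of_nonneg_of_le (fun _ ↦ norm_nonneg _) hfg)).trans
          (Summable.tsum_le_tsum hfg (hg.of_nonneg_of_le (fun _ ↦ norm_nonneg _) hfg) hg)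
    _ = g 0 + g 1 + ∑' n, g (n + 2) := by
        rw [← hg.sum_add_tsum_nat_add 2, Finset.sum_range_succ, Finset.sum_range_one]
    _ ≤ 1 + (s.re - 1)⁻¹ := by
        simp only [hg_add_two]
        gcongr ?_ + ?_
        · simp [g]
        · exact Real.tsum_nat_add_two_rpow_neg_le hs

lemma DirichletCharacter.one_le_norm_LSeries_pow_mul_of_sq_eq_one {N : ℕ}
    {χ : DirichletCharacter ℂ N} (hχ : χ ^ 2 = 1) {σ : ℝ} (hσ : 1 < σ) (τ : ℝ) :
    1 ≤ ‖LSeries (fun n : ℕ ↦ (1 : DirichletCharacter ℂ N) n) σ‖ ^ 3 *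
      ‖LSeries (fun n : ℕ ↦ χ n) (σ + τ * I)‖ ^ 4 *
      ‖LSeries (fun n : ℕ ↦ (1 : DirichletCharacter ℂ N) n) (σ + 2 * τ * I)‖ := by
  have h := χ.norm_LSeries_product_ge_one (x := σ - 1) (by linarith) τ
  rw [hχ, norm_mul, norm_mul, norm_pow, norm_pow, mul_comm I, mul_right_comm 2 I,
    show (1 : ℂ) + (σ - 1 : ℝ) = σ by push_cast; ring] at h
  exact h

lemma inv_le_of_one_le_pow_three_mul_pow_four_mul {a b c K : ℝ} (ha : 0 ≤ a) (hb : 0 ≤ b)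
    (hc : 0 ≤ c) (haK : a ≤ K) (hcK : c ≤ K) (h : 1 ≤ a ^ 3 * b ^ 4 * c) : b⁻¹ ≤ K := by
  have hK : 0 ≤ K := ha.trans haK
  have h1 : 1 ≤ (K * b) ^ 4 :=
    h.trans (by rw [mul_pow, show K ^ 4 = K ^ 3 * K by ring, mul_right_comm]; gcongr)
  have h2 : 1 ≤ K * b := (one_le_pow_iff_of_nonneg (by positivity) four_ne_zero).mp h1
  exact (inv_le_iff_one_le_mul₀ (pos_of_mul_pos_right (zero_lt_one.trans_le h2) hK)).mpr h2

/-- The 3-4-1 inequality for a real Dirichlet character and the resulting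
lower bound |L(σ+iτ,χ)|⁻¹ ≪ ε⁻¹ for σ ≥ 1 + ε. -/
theorem stmt_2 :
    ∃ c : ℝ, 0 < c ∧
      ∀ (N : ℕ) (χ : DirichletCharacter ℂ N), χ ^ 2 = 1 →
        (∀ σ τ : ℝ, 1 < σ →
          1 ≤ (‖LSeries (fun n : ℕ => (1 : DirichletCharacter ℂ N) (n : ZMod N)) (σ : ℂ)‖) ^ 3 *
              (‖LSeries (fun n : ℕ => χ (n : ZMod N)) ((σ : ℂ) + (τ : ℂ) * Complex.I)‖) ^ 4 *
              ‖LSeries (fun n : ℕ => (1 : DirichletCharacter ℂ N) (n : ZMod N))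
                ((σ : ℂ) + 2 * (τ : ℂ) * Complex.I)‖) ∧
        (∀ ε σ τ : ℝ, 0 < ε → ε ≤ 1 → 1 + ε ≤ σ →
          (‖LSeries (fun n : ℕ => χ (n : ZMod N)) ((σ : ℂ) + (τ : ℂ) * Complex.I)‖)⁻¹
            ≤ c / ε) := by
  refine ⟨2, two_pos, fun N χ hχ ↦
    ⟨fun σ τ hσ ↦ χ.one_le_norm_LSeries_pow_mul_of_sq_eq_one hχ hσ τ, fun ε σ τ hε hε1 hσ ↦ ?_⟩⟩
  have hσ1 : 1 < σ := by linarith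
  have principal_le {s : ℂ} (hs : s.re = σ) :
      ‖LSeries (fun n : ℕ ↦ (1 : DirichletCharacter ℂ N) n) s‖ ≤ 2 / ε := by
    refine (LSeries.norm_le_one_add_inv_sub_one (fun n ↦ DirichletCharacter.norm_le_one _ _)
      (hs ▸ hσ1)).trans ?_
    rw [hs, ← one_add_one_eq_two, add_div, one_div]
    gcongr
    · exact one_le_inv_iff₀.mpr ⟨hε, hε1⟩
    · linarith
  exact inv_le_of_one_le_pow_three_mul_pow_four_mul (norm_nonneg _) (norm_nonneg _)
    (norm_nonneg _) (principal_le (by simp)) (principal_le (by simp))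
    (χ.one_le_norm_LSeries_pow_mul_of_sq_eq_one hχ hσ1 τ)
end

section
/- Let y ≥ 2, u ≥ 1, and ρ the Dickman function (ρ(t) = 1 for 0 ≤ t ≤ 1, tρ'(t) = −ρ(t−1) for t > 1). Then ∫₀^{2u} y^{−v/2} ρ(2u − v) dv = (2/log y)·ρ(2u)·(1 + O(1/√(log y))), where the implied constant is absolute for u in a fixed bounded range. -/
open Set Real MeasureTheory

/-!
Writing `L = log y`, the integrand is `e^{-Lv/2} ρ(2u - v)`. The delay equation integrates to
`t ρ(t) = ∫_{t-1}^t ρ`, which forces `ρ > 0`; hence `-1 ≤ ρ' ≤ 0`, so `ρ` is nonincreasing and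
`1`-Lipschitz on `[0, ∞)`. Replacing `ρ(2u - v)` by `ρ(2u)` therefore costs at most
`∫₀^∞ v e^{-Lv/2} dv = 4/L²`, and `ρ(2u) ∫₀^{2u} e^{-Lv/2} dv` differs from `(2/L) ρ(2u)` by
`(2/L) e^{-Lu} ρ(2u) ≤ 2ρ(2u)/L²`. As `ρ(2u) ≥ ρ(2U) > 0`, the total error is
`O_U(ρ(2u)/L²)`, which is `O_U(ρ(2u)/(L√L))` because `L ≥ √(log 2) √L`.
-/

theorem MonotoneOn.Ici_of_hasDerivAt_nonneg {f f' : ℝ → ℝ} {a b : ℝ} (hab : a ≤ b)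
    (hIcc : MonotoneOn f (Icc a b)) (hf : ContinuousOn f (Ici b))
    (hd : ∀ t, b < t → HasDerivAt f (f' t) t) (hf' : ∀ t, b < t → 0 ≤ f' t) :
    MonotoneOn f (Ici a) := by
  have hIci : MonotoneOn f (Ici b) :=
    monotoneOn_of_hasDerivWithinAt_nonneg (convex_Ici b) hf
      (fun t ht ↦ (hd t (interior_Ici.subset ht)).hasDerivWithinAt)
      (fun t ht ↦ hf' t (interior_Ici.subset ht))
  rw [← Icc_union_Ici_eq_Ici hab]
  exact hIcc.union_right hIci (isGreatest_Icc hab) isLeast_Ici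

theorem integral_exp_neg_mul {c : ℝ} (hc : c ≠ 0) (A : ℝ) :
    ∫ v in (0:ℝ)..A, exp (-(c * v)) = (1 - exp (-(c * A))) / c := by
  have := intervalIntegral.integral_comp_mul_left (a := 0) (b := A) exp (neg_ne_zero.2 hc)
  simp only [neg_mul, mul_zero, integral_exp, exp_zero, smul_eq_mul] at this
  rw [this]
  field_simp
  ring

theorem integral_mul_exp_neg_mul_le {c : ℝ} (hc : 0 < c) {A : ℝ} (hA : 0 ≤ A) :
    ∫ v in (0:ℝ)..A, v * exp (-(c * v)) ≤ 1 / c ^ 2 := by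
  have hF : ∀ v ∈ uIcc 0 A, HasDerivAt (fun w ↦ -(w / c + 1 / c ^ 2) * exp (-(c * w)))
      (v * exp (-(c * v))) v := by
    intro v _
    have h1 : HasDerivAt (fun w ↦ -(w / c + 1 / c ^ 2)) (-(1 / c)) v := by
      simpa using (((hasDerivAt_id v).div_const c).add_const (1 / c ^ 2)).fun_neg
    have h2 : HasDerivAt (fun w ↦ exp (-(c * w))) (exp (-(c * v)) * -c) v := by
      simpa using ((hasDerivAt_id v).const_mul c).fun_neg.exp
    refine (h1.fun_mul h2).congr_deriv ?_
    field_simp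
    ring
  rw [intervalIntegral.integral_eq_sub_of_hasDerivAt hF
    (Continuous.intervalIntegrable (by fun_prop) _ _)]
  have : 0 ≤ (A / c + 1 / c ^ 2) * exp (-(c * A)) := by positivity
  simp only [mul_zero, neg_zero, exp_zero, zero_div, zero_add, mul_one]
  linarith

theorem abs_integral_exp_neg_mul_mul_sub_le {c A : ℝ} (hc : 0 < c) (hA : 0 ≤ A) {g : ℝ → ℝ}
    (hg : ContinuousOn g (Icc 0 A)) (hg0 : ∀ v ∈ Icc 0 A, |g v - g 0| ≤ v) :
    |(∫ v in (0:ℝ)..A, exp (-(c * v)) * g v) - g 0 / c| ≤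
      1 / c ^ 2 + |g 0| * exp (-(c * A)) / c := by
  have hexp : Continuous fun v ↦ exp (-(c * v)) := by fun_prop
  have hdev : IntervalIntegrable (fun v ↦ exp (-(c * v)) * (g v - g 0)) volume 0 A :=
    (hexp.continuousOn.mul (hg.sub continuousOn_const)).intervalIntegrable_of_Icc hA
  have hsplit : (∫ v in (0:ℝ)..A, exp (-(c * v)) * g v) - g 0 / c =
      (∫ v in (0:ℝ)..A, exp (-(c * v)) * (g v - g 0)) - g 0 * exp (-(c * A)) / c := by
    have := intervalIntegral.integral_add hdev
      ((hexp.intervalIntegrable 0 A).const_mul (g 0))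
    rw [intervalIntegral.integral_const_mul, integral_exp_neg_mul hc.ne'] at this
    have hpt : (fun v ↦ exp (-(c * v)) * (g v - g 0) + g 0 * exp (-(c * v))) =
        fun v ↦ exp (-(c * v)) * g v := by
      ext v; ring
    rw [hpt] at this
    rw [this]
    field_simp
    ring
  have hdev_le : |∫ v in (0:ℝ)..A, exp (-(c * v)) * (g v - g 0)| ≤ 1 / c ^ 2 := by
    rw [← Real.norm_eq_abs]
    refine (intervalIntegral.norm_integral_le_of_norm_le hA (ae_of_all _ fun v hv ↦ ?_)
      (Continuous.intervalIntegrable (by fun_prop) 0 A)).trans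
      (integral_mul_exp_neg_mul_le hc hA)
    rw [norm_mul, norm_of_nonneg (exp_pos _).le, mul_comm, Real.norm_eq_abs]
    exact mul_le_mul_of_nonneg_right (hg0 v (Ioc_subset_Icc_self hv)) (exp_pos _).le
  rw [hsplit]
  refine (abs_sub _ _).trans (add_le_add hdev_le (le_of_eq ?_))
  rw [abs_div, abs_mul, abs_of_pos (exp_pos _), abs_of_pos hc]

structure IsDickman (ρ : ℝ → ℝ) : Prop where
  eq_one : ∀ t : ℝ, 0 ≤ t → t ≤ 1 → ρ t = 1
  hasDerivAt : ∀ t : ℝ, 1 < t → HasDerivAt ρ (-(ρ (t - 1)) / t) t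
  continuousOn : ContinuousOn ρ (Ici 0)

namespace IsDickman

variable {ρ : ℝ → ℝ}

theorem continuousOn_comp_sub_one (hρ : IsDickman ρ) :
    ContinuousOn (fun s ↦ ρ (s - 1)) (Ici 1) :=
  hρ.continuousOn.comp (continuous_sub_right 1).continuousOn
    fun _ hs ↦ sub_nonneg.2 (mem_Ici.1 hs)

theorem intervalIntegrable (hρ : IsDickman ρ) {a b : ℝ} (ha : 0 ≤ a) (hab : a ≤ b) :
    IntervalIntegrable ρ volume a b :=
  (hρ.continuousOn.mono fun _ hx ↦ ha.trans (uIcc_of_le hab ▸ hx).1).intervalIntegrable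

theorem integral_zero_one (hρ : IsDickman ρ) : ∫ s in (0:ℝ)..1, ρ s = 1 := by
  have hone : EqOn ρ (fun _ ↦ 1) (uIcc 0 1) := fun s hs ↦ by
    rw [uIcc_of_le zero_le_one] at hs
    exact hρ.eq_one s hs.1 hs.2
  simp [intervalIntegral.integral_congr hone]

/-- Integrated form of the delay equation: `(t ρ(t))' = ρ(t) - ρ(t - 1)`. -/
theorem mul_eq_integral (hρ : IsDickman ρ) {b : ℝ} (hb : 1 ≤ b) :
    b * ρ b = ∫ s in (b - 1)..b, ρ s := by
  have hderiv : ∀ t ∈ Ioo 1 b, HasDerivAt (fun t ↦ t * ρ t) (ρ t - ρ (t - 1)) t := by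
    intro t ht
    refine ((hasDerivAt_id t).mul (hρ.hasDerivAt t ht.1)).congr_deriv ?_
    simp only [id_eq]
    field_simp [show t ≠ 0 by linarith [ht.1]]
    ring
  have hcont : ContinuousOn (fun t ↦ t * ρ t) (Icc 1 b) :=
    continuousOn_id.mul (hρ.continuousOn.mono fun t ht ↦ zero_le_one.trans ht.1)
  have hshift : IntervalIntegrable (fun s ↦ ρ (s - 1)) volume 1 b :=
    (hρ.continuousOn_comp_sub_one.mono fun _ hx ↦ (uIcc_of_le hb ▸ hx).1).intervalIntegrable
  have hFTC := intervalIntegral.integral_eq_sub_of_hasDerivAt_of_le hb hcont hderiv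
    ((hρ.intervalIntegrable zero_le_one hb).sub hshift)
  rw [intervalIntegral.integral_sub (hρ.intervalIntegrable zero_le_one hb) hshift,
    intervalIntegral.integral_comp_sub_right ρ 1, sub_self,
    hρ.eq_one 1 zero_le_one le_rfl] at hFTC
  have hb1 : 0 ≤ b - 1 := sub_nonneg.2 hb
  have h1 := intervalIntegral.integral_add_adjacent_intervals
    (hρ.intervalIntegrable le_rfl zero_le_one) (hρ.intervalIntegrable zero_le_one hb)
  have h2 := intervalIntegral.integral_add_adjacent_intervals
    (hρ.intervalIntegrable le_rfl hb1) (hρ.intervalIntegrable hb1 (sub_le_self b zero_le_one))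
  linarith [hρ.integral_zero_one]

theorem pos (hρ : IsDickman ρ) {t : ℝ} (ht : 0 ≤ t) : 0 < ρ t := by
  by_contra! hneg
  set S := Ici 0 ∩ ρ ⁻¹' Iic 0
  have hbdd : BddBelow S := ⟨0, fun _ hx ↦ hx.1⟩
  obtain ⟨hT0, hTρ⟩ : sInf S ∈ S :=
    (hρ.continuousOn.preimage_isClosed_of_isClosed isClosed_Ici isClosed_Iic).csInf_mem
      ⟨t, ht, hneg⟩ hbdd
  set T := sInf S
  have hT1 : 1 < T := by
    by_contra! hT1
    have := hρ.eq_one T hT0 hT1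
    linarith [show ρ T ≤ 0 from hTρ]
  -- `ρ > 0` on `[T - 1, T)` by minimality of `T`, so `T ρ(T) = ∫_{T-1}^T ρ > 0`.
  have hint : 0 < ∫ s in (T - 1)..T, ρ s := by
    refine intervalIntegral.intervalIntegral_pos_of_pos_on
      (hρ.intervalIntegrable (by linarith) (by linarith)) (fun s hs ↦ ?_) (by linarith)
    by_contra! hs'
    linarith [hs.2, csInf_le hbdd ⟨show (0:ℝ) ≤ s by linarith [hs.1], hs'⟩]
  rw [← hρ.mul_eq_integral hT1.le] at hint
  nlinarith [show ρ T ≤ 0 from hTρ]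

theorem antitoneOn (hρ : IsDickman ρ) : AntitoneOn ρ (Ici 0) := by
  have hneg : MonotoneOn (fun t ↦ -ρ t) (Ici 0) := by
    refine MonotoneOn.Ici_of_hasDerivAt_nonneg zero_le_one
      (fun s hs t ht _ ↦ by rw [hρ.eq_one s hs.1 hs.2, hρ.eq_one t ht.1 ht.2])
      (hρ.continuousOn.mono (Ici_subset_Ici.2 zero_le_one)).neg
      (fun t ht ↦ (hρ.hasDerivAt t ht).neg) fun t ht ↦ ?_
    rw [neg_div, neg_neg]
    exact div_nonneg (hρ.pos (by linarith)).le (by linarith)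
  exact fun s hs t ht hst ↦ neg_le_neg_iff.1 (hneg hs ht hst)

theorem le_one (hρ : IsDickman ρ) {t : ℝ} (ht : 0 ≤ t) : ρ t ≤ 1 :=
  hρ.eq_one 0 le_rfl zero_le_one ▸ hρ.antitoneOn (mem_Ici.2 le_rfl) ht ht

theorem monotoneOn_add_id (hρ : IsDickman ρ) : MonotoneOn (fun t ↦ ρ t + t) (Ici 0) := by
  refine MonotoneOn.Ici_of_hasDerivAt_nonneg zero_le_one
    (fun s hs t ht hst ↦ by simp only [hρ.eq_one s hs.1 hs.2, hρ.eq_one t ht.1 ht.2]; linarith)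
    ((hρ.continuousOn.mono (Ici_subset_Ici.2 zero_le_one)).add continuousOn_id)
    (fun t ht ↦ (hρ.hasDerivAt t ht).add (hasDerivAt_id t)) fun t ht ↦ ?_
  have : ρ (t - 1) / t ≤ 1 :=
    (div_le_one (by linarith)).2 ((hρ.le_one (by linarith)).trans ht.le)
  rw [neg_div]
  linarith

theorem abs_sub_le (hρ : IsDickman ρ) {a b : ℝ} (ha : 0 ≤ a) (hab : a ≤ b) :
    |ρ a - ρ b| ≤ b - a := by
  have hb : b ∈ Ici (0:ℝ) := ha.trans hab
  rw [abs_of_nonneg (sub_nonneg.2 (hρ.antitoneOn ha hb hab))]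
  linarith [hρ.monotoneOn_add_id ha hb hab]

theorem abs_integral_exp_neg_half_mul_sub_le (hρ : IsDickman ρ) {L u : ℝ} (hL : 0 < L)
    (hu : 1 ≤ u) :
    |(∫ v in (0:ℝ)..2 * u, exp (-(L / 2 * v)) * ρ (2 * u - v)) - 2 / L * ρ (2 * u)| ≤
      (4 + 2 * ρ (2 * u)) / L ^ 2 := by
  have hx : (0:ℝ) ≤ 2 * u := by linarith
  have hlaplace := abs_integral_exp_neg_mul_mul_sub_le (half_pos hL) hx
    (g := fun v ↦ ρ (2 * u - v))
    (hρ.continuousOn.comp (by fun_prop) fun v hv ↦ sub_nonneg.2 hv.2)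
    fun v hv ↦ by
      simpa [abs_sub_comm] using hρ.abs_sub_le (sub_nonneg.2 hv.2) (sub_le_self _ hv.1)
  have hpos := hρ.pos hx
  simp only [sub_zero, abs_of_pos hpos] at hlaplace
  have htail : exp (-(L / 2 * (2 * u))) ≤ 1 / L :=
    calc exp (-(L / 2 * (2 * u))) ≤ exp (-L) := exp_le_exp.2 (by nlinarith)
      _ = 1 / exp L := by rw [exp_neg, one_div]
      _ ≤ 1 / L := one_div_le_one_div_of_le hL (by linarith [add_one_le_exp L])
  calc _ = |(∫ v in (0:ℝ)..2 * u, exp (-(L / 2 * v)) * ρ (2 * u - v)) - ρ (2 * u) / (L / 2)| := by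
        congr 2; ring
    _ ≤ 4 / L ^ 2 + 2 / L * (ρ (2 * u) * exp (-(L / 2 * (2 * u)))) := by
        convert hlaplace using 1
        ring
    _ ≤ (4 + 2 * ρ (2 * u)) / L ^ 2 := by
        grw [htail]
        exact le_of_eq (by ring)

end IsDickman

/-- Laplace-type evaluation of ∫₀^{2u} y^{−v/2} ρ(2u−v) dv for the Dickman
function ρ: it equals (2/log y)·ρ(2u)·(1 + O(1/√(log y))) uniformly for u in a
bounded range. -/
theorem stmt_14 (ρ : ℝ → ℝ)
    (h01 : ∀ t : ℝ, 0 ≤ t → t ≤ 1 → ρ t = 1)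
    (hderiv : ∀ t : ℝ, 1 < t → HasDerivAt ρ (-(ρ (t - 1)) / t) t)
    (hcont : ContinuousOn ρ (Set.Ici (0 : ℝ)))
    (U : ℝ) (hU : 1 ≤ U) :
    ∃ C : ℝ, 0 < C ∧ ∀ y u : ℝ, 2 ≤ y → 1 ≤ u → u ≤ U →
      |(∫ v in (0 : ℝ)..(2 * u), y ^ (-(v / 2)) * ρ (2 * u - v)) -
        2 / Real.log y * ρ (2 * u)| ≤
      C * (2 / Real.log y) * ρ (2 * u) / Real.sqrt (Real.log y) := by
  have hρ : IsDickman ρ := ⟨h01, hderiv, hcont⟩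
  set P := ρ (2 * U)
  have hP : 0 < P := hρ.pos (by linarith)
  have hlog2 : 0 < log 2 := log_pos one_lt_two
  refine ⟨(2 / P + 1) / √(log 2), by positivity, fun y u hy hu huU ↦ ?_⟩
  have hrpow : ∀ v, y ^ (-(v / 2)) = exp (-(log y / 2 * v)) := fun v ↦ by
    rw [rpow_def_of_pos (by linarith)]; ring_nf
  have hL : log 2 ≤ log y := log_le_log two_pos hy
  have hL0 : 0 < log y := hlog2.trans_le hL
  have hPR : P ≤ ρ (2 * u) := hρ.antitoneOn (mem_Ici.2 (by linarith)) (mem_Ici.2 (by linarith))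
    (by linarith)
  have hR : 0 < ρ (2 * u) := hP.trans_le hPR
  have hsqrt : √(log 2) * √(log y) ≤ log y :=
    (mul_le_mul_of_nonneg_right (sqrt_le_sqrt hL) (sqrt_nonneg _)).trans_eq (mul_self_sqrt hL0.le)
  simp only [hrpow]
  calc _ ≤ (4 + 2 * ρ (2 * u)) / log y ^ 2 := hρ.abs_integral_exp_neg_half_mul_sub_le hL0 hu
    _ ≤ (4 * (ρ (2 * u) / P) + 2 * ρ (2 * u)) / (√(log 2) * √(log y) * log y) := by
        rw [sq]
        gcongr
        linarith [(one_le_div hP).2 hPR]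
    _ = (2 / P + 1) / √(log 2) * (2 / log y) * ρ (2 * u) / √(log y) := by
        field_simp
        ring
end

section
/- Let κ be the unique solution in (1, ∞) of ρ(2κ) = 2·log κ, where ρ is the Dickman function. Then κ > 10/9. -/
/-!
On `[1, 2]` the delay equation `t ρ'(t) = -ρ(t - 1)` integrates to `ρ t = 1 - log t`, so on
`[2, 3]` one has `ρ' t = -(1 - log (t - 1)) / t`. Bounding `log (t - 1)` from below by its
second Taylor polynomial gives `ρ t ≥ 1 - log t + (t - 2)² / 4 - (t - 2)³ / 6`. If
`κ ≤ 10/9`, then `2κ ∈ [2, 3]` and, with `log κ` bounded above by its third Taylor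
polynomial, the equation `ρ (2κ) = 2 log κ` would force `log 2 > 0.694`.
-/

open Real Set

lemma monotoneOn_Icc_of_hasDerivAt_nonneg {f f' : ℝ → ℝ} {a b : ℝ}
    (hf : ContinuousOn f (Icc a b)) (hf' : ∀ x ∈ Ioo a b, HasDerivAt f (f' x) x)
    (hf'₀ : ∀ x ∈ Ioo a b, 0 ≤ f' x) : MonotoneOn f (Icc a b) :=
  monotoneOn_of_hasDerivWithinAt_nonneg (convex_Icc a b) hf
    (by simpa only [interior_Icc] using fun x hx => (hf' x hx).hasDerivWithinAt)
    (by simpa only [interior_Icc] using hf'₀)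

lemma continuousOn_log_one_add : ContinuousOn (fun y => log (1 + y)) (Ici 0) :=
  ContinuousOn.log (by fun_prop) fun y hy => by simp only [mem_Ici] at hy; linarith

lemma hasDerivAt_log_one_add {y : ℝ} (hy : 0 < 1 + y) :
    HasDerivAt (fun y => log (1 + y)) (1 / (1 + y)) y := by
  simpa using ((hasDerivAt_id' y).const_add 1).log (by linarith)

lemma sub_sq_div_two_le_log_one_add {x : ℝ} (hx : 0 ≤ x) : x - x ^ 2 / 2 ≤ log (1 + x) := by
  have hmono : MonotoneOn (fun y => log (1 + y) - (y - y ^ 2 / 2)) (Icc 0 x) := by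
    refine monotoneOn_Icc_of_hasDerivAt_nonneg (f' := fun y => y ^ 2 / (1 + y))
      ((continuousOn_log_one_add.mono Icc_subset_Ici_self).sub (by fun_prop))
      (fun y hy => ?_) fun y hy => ?_
    · refine ((hasDerivAt_log_one_add (by linarith [hy.1])).sub
        ((hasDerivAt_id y).sub ((hasDerivAt_pow 2 y).div_const 2))).congr_deriv ?_
      have : 1 + y ≠ 0 := by linarith [hy.1]
      field_simp
      ring
    · have := hy.1
      positivity
  simpa using hmono (left_mem_Icc.2 hx) (right_mem_Icc.2 hx) hx

lemma log_one_add_le_sub_sq_div_two_add_cube_div_three {x : ℝ} (hx : 0 ≤ x) :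
    log (1 + x) ≤ x - x ^ 2 / 2 + x ^ 3 / 3 := by
  have hmono : MonotoneOn (fun y => y - y ^ 2 / 2 + y ^ 3 / 3 - log (1 + y)) (Icc 0 x) := by
    refine monotoneOn_Icc_of_hasDerivAt_nonneg (f' := fun y => y ^ 3 / (1 + y))
      ((by fun_prop : ContinuousOn _ _).sub (continuousOn_log_one_add.mono Icc_subset_Ici_self))
      (fun y hy => ?_) fun y hy => ?_
    · refine ((((hasDerivAt_id y).sub ((hasDerivAt_pow 2 y).div_const 2)).add
        ((hasDerivAt_pow 3 y).div_const 3)).sub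
        (hasDerivAt_log_one_add (by linarith [hy.1]))).congr_deriv ?_
      have : 1 + y ≠ 0 := by linarith [hy.1]
      field_simp
      ring
    · have := hy.1
      positivity
  simpa using hmono (left_mem_Icc.2 hx) (right_mem_Icc.2 hx) hx

structure IsDickmanFunction (ρ : ℝ → ℝ) : Prop where
  eq_one : ∀ t : ℝ, 0 ≤ t → t ≤ 1 → ρ t = 1
  hasDerivAt : ∀ t : ℝ, 1 < t → HasDerivAt ρ (-(ρ (t - 1)) / t) t
  continuousOn : ContinuousOn ρ (Ici 0)

namespace IsDickmanFunction

variable {ρ : ℝ → ℝ}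

lemma eq_one_sub_log (hρ : IsDickmanFunction ρ) {t : ℝ} (ht : t ∈ Icc 1 2) :
    ρ t = 1 - log t := by
  rcases eq_or_lt_of_le ht.1 with rfl | h1t
  · simp [hρ.eq_one 1 zero_le_one le_rfl]
  have hcont : ContinuousOn (fun s => ρ s + log s) (Icc 1 t) :=
    (hρ.continuousOn.mono fun s hs => by simp only [mem_Ici]; linarith [hs.1]).add
      (continuousOn_log.mono fun s hs => by simp only [mem_compl_singleton_iff]; linarith [hs.1])
  obtain ⟨_, -, hslope⟩ := exists_hasDerivAt_eq_slope (fun s => ρ s + log s) (fun _ => 0) h1t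
    hcont fun s hs => by
      have hρ1 : ρ (s - 1) = 1 := hρ.eq_one _ (by linarith [hs.1]) (by linarith [hs.2, ht.2])
      refine ((hρ.hasDerivAt s hs.1).add (hasDerivAt_log (by linarith [hs.1]))).congr_deriv ?_
      rw [hρ1]
      ring
  rw [eq_comm, div_eq_zero_iff, hρ.eq_one 1 zero_le_one le_rfl, log_one] at hslope
  rcases hslope with h | h <;> linarith

lemma one_sub_log_add_le (hρ : IsDickmanFunction ρ) {t : ℝ} (ht : t ∈ Icc 2 3) :
    1 - log t + (t - 2) ^ 2 / 4 - (t - 2) ^ 3 / 6 ≤ ρ t := by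
  set P : ℝ → ℝ := fun s => (s - 2) ^ 2 / 4 - (s - 2) ^ 3 / 6
  have hP : ∀ s, HasDerivAt P ((s - 2) / 2 - (s - 2) ^ 2 / 2) s := fun s => by
    have hlin := (hasDerivAt_id' s).sub_const 2
    exact ((hlin.pow 2).div_const 4).sub ((hlin.pow 3).div_const 6) |>.congr_deriv (by ring)
  have hmono : MonotoneOn (fun s => ρ s + log s - P s) (Icc 2 t) := by
    refine monotoneOn_Icc_of_hasDerivAt_nonneg
      (f' := fun s => log (s - 1) / s - ((s - 2) / 2 - (s - 2) ^ 2 / 2)) ?_ (fun s hs => ?_)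
      fun s hs => ?_
    · refine ((hρ.continuousOn.mono fun s hs => ?_).add
        (continuousOn_log.mono fun s hs => ?_)).sub (by fun_prop)
      · simp only [mem_Ici]; linarith [hs.1]
      · simp only [mem_compl_singleton_iff]; linarith [hs.1]
    · have hρ1 :=
        hρ.eq_one_sub_log (t := s - 1) ⟨by linarith [hs.1], by linarith [hs.2, ht.2]⟩
      refine (((hρ.hasDerivAt s (by linarith [hs.1])).add
        (hasDerivAt_log (by linarith [hs.1]))).sub (hP s)).congr_deriv ?_
      rw [hρ1]
      ring
    -- `log (1 + x) ≥ x - x² / 2 ≥ (2 + x) (x / 2 - x² / 2)` with `x = s - 2`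
    · have hx : 0 ≤ s - 2 := by linarith [hs.1]
      have hlog := sub_sq_div_two_le_log_one_add hx
      rw [show 1 + (s - 2) = s - 1 by ring] at hlog
      rw [sub_nonneg, le_div_iff₀ (by linarith)]
      nlinarith [pow_nonneg hx 3]
  have h2 := hρ.eq_one_sub_log (t := 2) ⟨by norm_num, le_rfl⟩
  have h2t := hmono (left_mem_Icc.2 ht.1) (right_mem_Icc.2 ht.1) ht.1
  norm_num [P, h2] at h2t
  linarith

end IsDickmanFunction

/-- The unique solution κ > 1 of ρ(2κ) = 2 log κ, where ρ is the Dickman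
function, satisfies κ > 10/9. -/
theorem stmt_15 (ρ : ℝ → ℝ)
    (h01 : ∀ t : ℝ, 0 ≤ t → t ≤ 1 → ρ t = 1)
    (hderiv : ∀ t : ℝ, 1 < t → HasDerivAt ρ (-(ρ (t - 1)) / t) t)
    (hcont : ContinuousOn ρ (Set.Ici (0 : ℝ)))
    (κ : ℝ) (hκ : 1 < κ) (heq : ρ (2 * κ) = 2 * Real.log κ) :
    10 / 9 < κ := by
  by_contra! hκ'
  have hρ : IsDickmanFunction ρ := ⟨h01, hderiv, hcont⟩
  have hlower := hρ.one_sub_log_add_le (t := 2 * κ) ⟨by linarith, by linarith⟩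
  have hlogκ := log_one_add_le_sub_sq_div_two_add_cube_div_three (x := κ - 1) (by linarith)
  rw [add_sub_cancel] at hlogκ
  rw [heq, log_mul two_ne_zero (by positivity)] at hlower
  nlinarith [log_two_lt_d9, mul_nonneg (sub_nonneg.2 hκ') (sub_nonneg.2 hκ.le)]
end
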